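/- arXiv:math/0610004 — 5 statements merged into one kernel-verified Lean document; each statement's English description precedes it below -/
import Mathlib

section
/- Let n ≥ 1 and let A, ν and Π_ν be as in the context. For α ∈ A set C_α = {u ∈ ℝⁿ : ⟨u,β⟩ − ν(β) < ⟨u,α⟩ − ν(α) for every β ∈ A with β ≠ α}. Then the complement ℝⁿ ∖ Π_ν is the disjoint union of the sets C_α over α ∈ A, and each nonempty C_α is a connected component of ℝⁿ ∖ Π_ν; consequently the connected components of the complement of the tropical amoeba are exactly the nonempty sets C_α, so they are labeled by elements of A. -/
open scoped BigOperators

/-- The tropical amoeba `Π_ν`: points where `max_{α ∈ A} (⟨u, α⟩ - ν(α))` is attained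
by at least two elements of `A`. -/
def tropAmoeba {n : ℕ} (A : Finset (Fin n → ℤ)) (ν : (Fin n → ℤ) → ℝ) :
    Set (Fin n → ℝ) :=
  {u | ∃ α ∈ A, ∃ β ∈ A, α ≠ β ∧
      (∑ i, u i * (α i : ℝ)) - ν α = (∑ i, u i * (β i : ℝ)) - ν β ∧
      ∀ γ ∈ A, (∑ i, u i * (γ i : ℝ)) - ν γ ≤ (∑ i, u i * (α i : ℝ)) - ν α}

/-- The region `C_α` where the linear function of `α` strictly dominates all others. -/
def domRegion {n : ℕ} (A : Finset (Fin n → ℤ)) (ν : (Fin n → ℤ) → ℝ)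
    (α : Fin n → ℤ) : Set (Fin n → ℝ) :=
  {u | ∀ β ∈ A, β ≠ α →
      (∑ i, u i * (β i : ℝ)) - ν β < (∑ i, u i * (α i : ℝ)) - ν α}

lemma cont_lin {n : ℕ} (ν : (Fin n → ℤ) → ℝ) (β : Fin n → ℤ) :
    Continuous fun u : Fin n → ℝ => (∑ i, u i * (β i : ℝ)) - ν β := by
  refine Continuous.sub ?_ continuous_const
  exact continuous_finset_sum _ fun i _ => (continuous_apply i).mul continuous_const

lemma isOpen_domRegion {n : ℕ} (A : Finset (Fin n → ℤ)) (ν : (Fin n → ℤ) → ℝ)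
    (α : Fin n → ℤ) : IsOpen (domRegion A ν α) := by
  have h : domRegion A ν α = ⋂ β ∈ A.filter (· ≠ α),
      {u : Fin n → ℝ | (∑ i, u i * (β i : ℝ)) - ν β < (∑ i, u i * (α i : ℝ)) - ν α} := by
    ext u
    simp [domRegion, Set.mem_iInter, Finset.mem_filter]
  rw [h]
  refine isOpen_biInter_finset fun β _ => ?_
  exact isOpen_lt (cont_lin ν β) (cont_lin ν α)

lemma combo_lt (p q r s c d a b : ℝ) (h1 : p - c < q - d) (h2 : r - c ≤ s - d)
    (ha : 0 < a) (hb : 0 ≤ b) (hab : a + b = 1) :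
    a * p + b * r - c < a * q + b * s - d := by
  have hc : a * c + b * c = c := by rw [← add_mul, hab, one_mul]
  have hd : a * d + b * d = d := by rw [← add_mul, hab, one_mul]
  nlinarith [mul_lt_mul_of_pos_left h1 ha, mul_le_mul_of_nonneg_left h2 hb]

lemma convex_domRegion {n : ℕ} (A : Finset (Fin n → ℤ)) (ν : (Fin n → ℤ) → ℝ)
    (α : Fin n → ℤ) : Convex ℝ (domRegion A ν α) := by
  intro u hu v hv a b ha hb hab
  intro β hβ hne
  have hu' := hu β hβ hne
  have hv' := hv β hβ hne
  have key : ∀ γ : Fin n → ℤ,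
      (∑ i, (a • u + b • v) i * (γ i : ℝ)) =
        a * (∑ i, u i * (γ i : ℝ)) + b * (∑ i, v i * (γ i : ℝ)) := by
    intro γ
    rw [Finset.mul_sum, Finset.mul_sum, ← Finset.sum_add_distrib]
    refine Finset.sum_congr rfl fun i _ => ?_
    simp [Pi.add_apply, Pi.smul_apply, smul_eq_mul]
    ring
  rw [key, key]
  rcases eq_or_lt_of_le ha with h | h
  · have ha0 : a = 0 := h.symm
    have hb1 : b = 1 := by linarith
    rw [ha0, hb1]; simpa using hv'
  · exact combo_lt _ _ _ _ _ _ _ _ hu' hv'.le h hb hab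

/-- The complement of the tropical amoeba is the disjoint union of the
sets `C_α`, `α ∈ A`, and each nonempty `C_α` is a connected component of the
complement. -/
theorem statement3 (n : ℕ) (hn : 1 ≤ n) (A : Finset (Fin n → ℤ))
    (h0A : (0 : Fin n → ℤ) ∈ A) (ν : (Fin n → ℤ) → ℝ) (hν : ν 0 = 0) :
    ((tropAmoeba A ν)ᶜ = ⋃ α ∈ A, domRegion A ν α) ∧
    (∀ α ∈ A, ∀ β ∈ A, α ≠ β → Disjoint (domRegion A ν α) (domRegion A ν β)) ∧
    (∀ α ∈ A, ∀ u ∈ domRegion A ν α,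
        connectedComponentIn ((tropAmoeba A ν)ᶜ) u = domRegion A ν α) := by
  set f : (Fin n → ℝ) → (Fin n → ℤ) → ℝ := fun u γ => (∑ i, u i * (γ i : ℝ)) - ν γ with hf
  -- complement = union
  have hcompl : (tropAmoeba A ν)ᶜ = ⋃ α ∈ A, domRegion A ν α := by
    ext u
    constructor
    · intro hu
      obtain ⟨α, hα, hmax⟩ := A.exists_max_image (f u) ⟨0, h0A⟩
      refine Set.mem_biUnion hα fun β hβ hne => ?_
      rcases lt_or_eq_of_le (hmax β hβ) with h | h
      · exact h
      · exact absurd ⟨α, hα, β, hβ, hne.symm, h.symm, hmax⟩ hu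
    · intro hu
      obtain ⟨α, hα, hu⟩ := Set.mem_iUnion₂.mp hu
      rintro ⟨γ, hγ, δ, hδ, hne, heq, hmax⟩
      by_cases hγα : γ = α
      · subst hγα
        have hδα : δ ≠ γ := fun h => hne (h.symm)
        exact absurd heq (ne_of_gt (by simpa using hu δ hδ hδα))
      · have h1 : f u γ < f u α := hu γ hγ hγα
        have h2 : f u α ≤ f u γ := hmax α hα
        exact absurd h1 (not_lt.mpr h2)
  -- disjointness
  have hdisj : ∀ α ∈ A, ∀ β ∈ A, α ≠ β → Disjoint (domRegion A ν α) (domRegion A ν β) := by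
    intro α hα β hβ hne
    rw [Set.disjoint_left]
    intro u hu hv
    have h1 := hu β hβ (fun h => hne h.symm)
    have h2 := hv α hα hne
    exact absurd h1 (not_lt.mpr h2.le)
  refine ⟨hcompl, hdisj, ?_⟩
  intro α hα u hu
  have huF : u ∈ (tropAmoeba A ν)ᶜ := by
    rw [hcompl]; exact Set.mem_biUnion hα hu
  apply le_antisymm
  · -- component ⊆ domRegion
    have hsub : connectedComponentIn ((tropAmoeba A ν)ᶜ) u ⊆
        domRegion A ν α ∪ ⋃ β ∈ A.filter (· ≠ α), domRegion A ν β := by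
      intro x hx
      have hxF := connectedComponentIn_subset ((tropAmoeba A ν)ᶜ) u hx
      rw [hcompl] at hxF
      obtain ⟨β, hβ, hxβ⟩ := Set.mem_iUnion₂.mp hxF
      by_cases h : β = α
      · exact Or.inl (h ▸ hxβ)
      · exact Or.inr (Set.mem_biUnion (Finset.mem_filter.mpr ⟨hβ, h⟩) hxβ)
    have hdisj2 : Disjoint (domRegion A ν α)
        (⋃ β ∈ A.filter (· ≠ α), domRegion A ν β) := by
      rw [Set.disjoint_iUnion₂_right]
      intro β hβ
      rw [Finset.mem_filter] at hβ
      exact hdisj α hα β hβ.1 (fun h => hβ.2 h.symm)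
    have hopen2 : IsOpen (⋃ β ∈ A.filter (· ≠ α), domRegion A ν β) :=
      isOpen_biUnion fun β _ => isOpen_domRegion A ν β
    exact (isPreconnected_connectedComponentIn).subset_left_of_subset_union
      (isOpen_domRegion A ν α) hopen2 hdisj2 hsub
      ⟨u, mem_connectedComponentIn huF, hu⟩
  · -- domRegion ⊆ component
    refine IsPreconnected.subset_connectedComponentIn
      (convex_domRegion A ν α).isPreconnected hu ?_
    rw [hcompl]
    exact fun x hx => Set.mem_biUnion hα hx
end

section
/- Fix d ≥ 1, and let the cones C_j ⊆ ℝ^d and their translates C_j(r) be as in the context. There exists a constant K > 0, depending only on d, with the following property: for every r > 0 and all nonempty subsets U, W ⊆ {0, 1, …, d} with max U < min W, the set (⋂_{u∈U} C_u) ∩ (⋂_{w∈W} C_w(r)) is contained in the set of points at Euclidean distance at most K·r from the cell ⋂_{v ∈ U∪W} C_v(r). (In the local model of two dual subdivisions in simplicial position, an intersection of dual cells of the second kind lies in a neighbourhood, of size proportional to the translation parameter, of the lower-dimensional dual cell of the concatenated chain.) -/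
/-- For `x ∈ ℝ^d`, the extended coordinates `x̃₀ = 0` and `x̃ᵢ = xᵢ` for `1 ≤ i ≤ d`. -/
def tildeCoord {d : ℕ} (x : EuclideanSpace ℝ (Fin d)) : Fin (d + 1) → ℝ :=
  Fin.cases 0 (fun i => x i)

/-- The closed cone `C_j = {x ∈ ℝ^d : x̃ᵢ ≤ x̃ⱼ for all i}` of the subdivision `Π^d`. -/
def coneCell (d : ℕ) (j : Fin (d + 1)) : Set (EuclideanSpace ℝ (Fin d)) :=
  {x | ∀ i, tildeCoord x i ≤ tildeCoord x j}

/-- The translation vector `v(r) = (-r/d, …, -r/2, -r)`. -/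
noncomputable def shiftVec (d : ℕ) (r : ℝ) : EuclideanSpace ℝ (Fin d) :=
  WithLp.toLp 2 (fun i : Fin d => -r / ((d : ℝ) - (i : ℕ)))

/-- The translated cone `C_j(r) = v(r) + C_j` of the subdivision `Π^d(r)`. -/
def coneCellShift (d : ℕ) (r : ℝ) (j : Fin (d + 1)) : Set (EuclideanSpace ℝ (Fin d)) :=
  {x | x - shiftVec d r ∈ coneCell d j}

/-!
Write `p := x - v(r)`. Since `x ∈ C_u` for `u ∈ U`, `x - v(r) ∈ C_w` for `w ∈ W`, and every extended
coordinate of `v(r)` lies in `[-r, 0]`, the extended coordinates of `p` satisfy `p̃ᵢ ≤ p̃ₛ + r` for all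
`i` and all `s ∈ U ∪ W`: `p` is an `r`-approximate point of the cell `⋂_{s ∈ U ∪ W} C_s`. Raising the
coordinates indexed by `U ∪ W` to a common value `T = p̃_{s₀}` and capping the others at `T` moves every
extended coordinate by at most `r`; renormalising so that the `0`-th coordinate is `0` again gives a
point of that cell at sup-distance at most `2r`, hence Euclidean distance at most `2√d r`, from `p`.
-/

open Finset

variable {d : ℕ}

@[simp]
theorem tildeCoord_zero (x : EuclideanSpace ℝ (Fin d)) : tildeCoord x 0 = 0 := rfl

@[simp]
theorem tildeCoord_succ (x : EuclideanSpace ℝ (Fin d)) (i : Fin d) :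
    tildeCoord x i.succ = x i := rfl

theorem tildeCoord_sub (x y : EuclideanSpace ℝ (Fin d)) (i : Fin (d + 1)) :
    tildeCoord (x - y) i = tildeCoord x i - tildeCoord y i := by
  cases i using Fin.cases <;> simp

theorem tildeCoord_shiftVec_nonpos {r : ℝ} (hr : 0 ≤ r) (i : Fin (d + 1)) :
    tildeCoord (shiftVec d r) i ≤ 0 := by
  cases i using Fin.cases with
  | zero => simp
  | succ j =>
    have hj : (0 : ℝ) < (d : ℝ) - (j : ℕ) := by
      have := j.is_lt
      rw [sub_pos]
      exact_mod_cast this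
    simpa [shiftVec, neg_div] using div_nonneg hr hj.le

theorem neg_le_tildeCoord_shiftVec {r : ℝ} (hr : 0 ≤ r) (i : Fin (d + 1)) :
    -r ≤ tildeCoord (shiftVec d r) i := by
  cases i using Fin.cases with
  | zero => simpa using hr
  | succ j =>
    have hj : (1 : ℝ) ≤ (d : ℝ) - (j : ℕ) := by
      have := j.is_lt
      rw [le_sub_iff_add_le']
      exact_mod_cast this
    simpa [shiftVec, neg_div] using div_le_self hr hj

theorem tildeCoord_sub_le_of_mem_coneCell {x a : EuclideanSpace ℝ (Fin d)} {u w : Fin (d + 1)}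
    (hu : x ∈ coneCell d u) (hw : x - a ∈ coneCell d w) (i : Fin (d + 1)) :
    tildeCoord (x - a) i ≤ tildeCoord (x - a) u + (tildeCoord a u - tildeCoord a w) := by
  have hxw := hu w
  have hi := hw i
  simp only [tildeCoord_sub] at hi ⊢
  linarith

noncomputable def ofTildeCoord (q : Fin (d + 1) → ℝ) : EuclideanSpace ℝ (Fin d) :=
  WithLp.toLp 2 fun i => q i.succ - q 0

theorem tildeCoord_ofTildeCoord (q : Fin (d + 1) → ℝ) (i : Fin (d + 1)) :
    tildeCoord (ofTildeCoord q) i = q i - q 0 := by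
  cases i using Fin.cases <;> simp [ofTildeCoord]

theorem EuclideanSpace.dist_le_sqrt_card_mul {ι : Type*} [Fintype ι]
    {x y : EuclideanSpace ℝ ι} {c : ℝ} (hc : 0 ≤ c) (h : ∀ i, dist (x i) (y i) ≤ c) :
    dist x y ≤ √(Fintype.card ι) * c := by
  rw [EuclideanSpace.dist_eq, ← Real.sqrt_sq hc, ← Real.sqrt_mul (Nat.cast_nonneg _)]
  gcongr
  calc ∑ i, dist (x i) (y i) ^ 2 ≤ ∑ _i : ι, c ^ 2 := by
        gcongr with i
        exact h i
    _ = Fintype.card ι * c ^ 2 := by simp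

theorem dist_ofTildeCoord_le {p : EuclideanSpace ℝ (Fin d)} {q : Fin (d + 1) → ℝ} {ε : ℝ}
    (hε : 0 ≤ ε) (h : ∀ i, |q i - tildeCoord p i| ≤ ε) :
    dist p (ofTildeCoord q) ≤ 2 * √d * ε := by
  have hcoord : ∀ j, dist (p j) (ofTildeCoord q j) ≤ 2 * ε := by
    intro j
    have h0 := h 0
    have hj := h j.succ
    simp only [tildeCoord_zero, sub_zero, tildeCoord_succ, abs_le] at h0 hj
    rw [Real.dist_eq, abs_le]
    simp only [ofTildeCoord]
    constructor <;> linarith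
  calc dist p (ofTildeCoord q) ≤ √(Fintype.card (Fin d)) * (2 * ε) :=
        EuclideanSpace.dist_le_sqrt_card_mul (by linarith) hcoord
    _ = 2 * √d * ε := by rw [Fintype.card_fin]; ring

theorem exists_mem_iInter_coneCell_dist_le (p : EuclideanSpace ℝ (Fin d))
    {S : Finset (Fin (d + 1))} (hS : S.Nonempty) {ε : ℝ}
    (h : ∀ s ∈ S, ∀ i, tildeCoord p i ≤ tildeCoord p s + ε) :
    ∃ q ∈ ⋂ s ∈ S, coneCell d s, dist p q ≤ 2 * √d * ε := by
  classical
  obtain ⟨s₀, hs₀⟩ := hS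
  set T := tildeCoord p s₀
  set q : Fin (d + 1) → ℝ := fun i => if i ∈ S then T else min (tildeCoord p i) T
  have hq_le : ∀ i, q i ≤ T := fun i => by
    by_cases hi : i ∈ S <;> simp [q, hi]
  have hq_eq : ∀ s ∈ S, q s = T := fun s hs => if_pos hs
  have hq_near : ∀ i, |q i - tildeCoord p i| ≤ ε := by
    intro i
    have hi := h s₀ hs₀ i
    rw [abs_le]
    by_cases hiS : i ∈ S
    · have := h i hiS s₀
      simp only [q, if_pos hiS]
      constructor <;> linarith
    · have hε : 0 ≤ ε := by linarith [h s₀ hs₀ s₀]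
      simp only [q, if_neg hiS]
      rcases min_cases (tildeCoord p i) T with ⟨hmin, hle⟩ | ⟨hmin, hlt⟩ <;> rw [hmin] <;>
        constructor <;> linarith
  refine ⟨ofTildeCoord q, ?_, dist_ofTildeCoord_le ((abs_nonneg _).trans (hq_near 0)) hq_near⟩
  simp only [Set.mem_iInter, coneCell, Set.mem_ofPred_eq, tildeCoord_ofTildeCoord]
  intro s hs i
  rw [hq_eq s hs]
  linarith [hq_le i]

/-- There is a constant `K > 0`, depending only on `d`, such that for
all `r > 0` and nonempty `U, W ⊆ {0, …, d}` with `max U < min W`, the intersection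
`(⋂_{u ∈ U} C_u) ∩ (⋂_{w ∈ W} C_w(r))` lies within Euclidean distance `K·r` of the cell
`⋂_{v ∈ U ∪ W} C_v(r)`. -/
theorem statement5 (d : ℕ) (hd : 1 ≤ d) :
    ∃ K > (0 : ℝ), ∀ r > (0 : ℝ),
      ∀ (U W : Finset (Fin (d + 1))) (hU : U.Nonempty) (hW : W.Nonempty),
        U.max' hU < W.min' hW →
        ∀ x ∈ (⋂ u ∈ U, coneCell d u) ∩ (⋂ w ∈ W, coneCellShift d r w),
          Metric.infDist x (⋂ v ∈ U ∪ W, coneCellShift d r v) ≤ K * r := by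
  refine ⟨2 * √d, by positivity, fun r hr U W _ hW _ x ⟨hxU, hxW⟩ => ?_⟩
  simp only [Set.mem_iInter] at hxU hxW
  obtain ⟨w₀, hw₀⟩ := hW
  have happrox : ∀ s ∈ U ∪ W, ∀ i,
      tildeCoord (x - shiftVec d r) i ≤ tildeCoord (x - shiftVec d r) s + r := by
    intro s hs i
    rcases mem_union.mp hs with hs | hs
    · have := tildeCoord_sub_le_of_mem_coneCell (hxU s hs) (hxW w₀ hw₀) i
      linarith [tildeCoord_shiftVec_nonpos hr.le s, neg_le_tildeCoord_shiftVec hr.le w₀]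
    · linarith [hxW s hs i]
  obtain ⟨q, hq, hdist⟩ :=
    exists_mem_iInter_coneCell_dist_le _ ⟨w₀, mem_union_right _ hw₀⟩ happrox
  have hmem : q + shiftVec d r ∈ ⋂ v ∈ U ∪ W, coneCellShift d r v := by
    simpa [coneCellShift] using hq
  calc Metric.infDist x _ ≤ dist x (q + shiftVec d r) := Metric.infDist_le_dist_of_mem hmem
    _ = dist (x - shiftVec d r) q := by
      rw [← dist_sub_right _ _ (shiftVec d r), add_sub_cancel_right]
    _ ≤ 2 * √d * r := hdist
end

section
/- Let n ≥ 1 and let M and 𝒜 be as in the context. If z ∈ M and Log(z) lies in the frontier (topological boundary) of the amoeba 𝒜, then every coordinate zᵢ of z is a real number. (The part of the standard hyperplane lying over the boundary of its amoeba is contained in the real locus of the hyperplane.) -/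
open scoped BigOperators

/-- The logarithm map `Log(z) = (log |z₁|, …, log |zₙ|)`. -/
noncomputable def LogMap {n : ℕ} (z : Fin n → ℂ) : Fin n → ℝ :=
  fun i => Real.log ‖z i‖

/-- The standard hyperplane `{z ∈ (ℂ*)ⁿ : z₁ + ⋯ + zₙ = 1}`. -/
def stdHyperplane (n : ℕ) : Set (Fin n → ℂ) :=
  {z | (∀ i, z i ≠ 0) ∧ ∑ i, z i = 1}

/-- The amoeba of the standard hyperplane. -/
noncomputable def stdAmoeba (n : ℕ) : Set (Fin n → ℝ) :=
  LogMap '' stdHyperplane n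

/-!
If some `zᵢ` is not real, then `∑ⱼ zⱼ zᵢ̄ = zᵢ̄` forces some pair `zⱼ, zₖ` to be linearly
independent over `ℝ`, so both triangle inequalities for `zⱼ + zₖ` are strict. Near `Log z`, keep
the arguments of the other coordinates and prescribe their moduli; the remainder
`s = 1 - ∑_{i ≠ j, k} zᵢ` still lies strictly between `|rⱼ - rₖ|` and `rⱼ + rₖ`, so two circles
of radii `rⱼ, rₖ` meet and `s` splits as `zⱼ + zₖ` with the prescribed moduli. Hence `Log z` is an
interior point of the amoeba.
-/

open Complex ComplexConjugate Metric Set Filter Topology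

section CircleIntersection

variable {E : Type*} [NormedAddCommGroup E] [NormedSpace ℝ E]

theorem exists_norm_eq_one_smul_eq (hE : 1 < Module.rank ℝ E) (s : E) :
    ∃ u : E, ‖u‖ = 1 ∧ ‖s‖ • u = s := by
  rcases eq_or_ne s 0 with rfl | hs
  · obtain ⟨u, hu⟩ := (isConnected_sphere hE (0 : E) zero_le_one).nonempty
    exact ⟨u, mem_sphere_zero_iff_norm.1 hu, by simp⟩
  · refine ⟨‖s‖⁻¹ • s, ?_, ?_⟩
    · rw [norm_smul, norm_inv, norm_norm, inv_mul_cancel₀ (norm_ne_zero_iff.2 hs)]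
    · rw [smul_smul, mul_inv_cancel₀ (norm_ne_zero_iff.2 hs), one_smul]

theorem exists_norm_eq_and_norm_sub_eq (hE : 1 < Module.rank ℝ E) {s : E} {r₁ r₂ : ℝ}
    (hr₁ : 0 ≤ r₁) (hs : ‖s‖ ∈ Icc |r₁ - r₂| (r₁ + r₂)) :
    ∃ w : E, ‖w‖ = r₁ ∧ ‖s - w‖ = r₂ := by
  obtain ⟨u, hu, hsu⟩ := exists_norm_eq_one_smul_eq hE s
  have hnorm : ∀ c : ℝ, ‖s - c • u‖ = |‖s‖ - c| := fun c => by
    rw [← Real.norm_eq_abs, ← mul_one ‖‖s‖ - c‖, ← hu, ← norm_smul, sub_smul, hsu]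
  have hmem : ∀ c : ℝ, |c| = r₁ → c • u ∈ sphere (0 : E) r₁ := fun c hc => by
    rw [mem_sphere_zero_iff_norm, norm_smul, hu, mul_one, Real.norm_eq_abs, hc]
  have hr : r₂ ∈ Icc (‖s - r₁ • u‖) ‖s - (-r₁) • u‖ := by
    rw [hnorm, hnorm, sub_neg_eq_add, abs_of_nonneg (add_nonneg (norm_nonneg s) hr₁)]
    obtain ⟨hlo, hhi⟩ := hs
    obtain ⟨hlo₁, hlo₂⟩ := abs_sub_le_iff.1 hlo
    exact ⟨abs_sub_le_iff.2 ⟨by linarith, by linarith⟩, by linarith⟩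
  obtain ⟨w, hw, hw'⟩ := (isConnected_sphere hE (0 : E) hr₁).isPreconnected.intermediate_value
    (hmem r₁ (abs_of_nonneg hr₁)) (hmem (-r₁) (by rw [abs_neg, abs_of_nonneg hr₁]))
    (f := fun w => ‖s - w‖) (by fun_prop) hr
  exact ⟨w, mem_sphere_zero_iff_norm.1 hw, hw'⟩

end CircleIntersection

namespace Complex

theorem norm_add_mem_Ioo {a b : ℂ} (h : (a * conj b).im ≠ 0) :
    ‖a + b‖ ∈ Ioo |‖a‖ - ‖b‖| (‖a‖ + ‖b‖) := by
  have hsq : ‖a + b‖ ^ 2 = ‖a‖ ^ 2 + ‖b‖ ^ 2 + 2 * (a * conj b).re := by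
    simp only [Complex.sq_norm, normSq_add]
  have hre : |(a * conj b).re| < ‖a‖ * ‖b‖ := by
    simpa [norm_mul] using abs_re_lt_norm.2 h
  obtain ⟨hre₁, hre₂⟩ := abs_lt.1 hre
  constructor
  · exact abs_lt_of_sq_lt_sq (by nlinarith) (norm_nonneg _)
  · exact lt_of_pow_lt_pow_left₀ 2 (by positivity) (by nlinarith)

theorem exists_im_mul_conj_ne_zero {ι : Type*} [Fintype ι] {z : ι → ℂ} (hz : ∑ i, z i = 1)
    {k : ι} (hk : (z k).im ≠ 0) : ∃ j, (z j * conj (z k)).im ≠ 0 := by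
  by_contra! h
  have hsum : ∑ j, z j * conj (z k) = conj (z k) := by rw [← Finset.sum_mul, hz, one_mul]
  apply hk
  simpa [h] using congrArg im hsum

end Complex

theorem mem_stdAmoeba_of_norm_eq_exp {n : ℕ} {x : Fin n → ℝ} (w : Fin n → ℂ)
    (hw : ∀ i, ‖w i‖ = Real.exp (x i)) (hsum : ∑ i, w i = 1) : x ∈ stdAmoeba n := by
  refine ⟨w, ⟨fun i hi => (Real.exp_pos (x i)).ne' ?_, hsum⟩, ?_⟩
  · rw [← hw i, hi, norm_zero]
  · funext i
    rw [LogMap, hw i, Real.log_exp]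

theorem mem_stdAmoeba_of_mem_Icc {n : ℕ} {x : Fin n → ℝ} {j k : Fin n} (hjk : j ≠ k)
    (v : Fin n → ℂ) (hv : ∀ i ∈ ({j, k} : Finset (Fin n))ᶜ, ‖v i‖ = Real.exp (x i))
    (hs : ‖1 - ∑ i ∈ ({j, k} : Finset (Fin n))ᶜ, v i‖ ∈
      Icc |Real.exp (x j) - Real.exp (x k)| (Real.exp (x j) + Real.exp (x k))) :
    x ∈ stdAmoeba n := by
  set s := 1 - ∑ i ∈ ({j, k} : Finset (Fin n))ᶜ, v i
  obtain ⟨w₁, hw₁, hw₂⟩ := exists_norm_eq_and_norm_sub_eq (by simp [rank_real_complex])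
    (Real.exp_pos (x j)).le hs
  set w : Fin n → ℂ := fun i => if i = j then w₁ else if i = k then s - w₁ else v i
  have hw_compl : ∀ i ∈ ({j, k} : Finset (Fin n))ᶜ, w i = v i := fun i hi => by
    simp only [Finset.mem_compl, Finset.mem_insert, Finset.mem_singleton, not_or] at hi
    simp only [w, if_neg hi.1, if_neg hi.2]
  refine mem_stdAmoeba_of_norm_eq_exp w (fun i => ?_) ?_
  · by_cases hij : i = j
    · simpa [w, hij] using hw₁
    by_cases hik : i = k
    · simpa [w, hik, hjk.symm] using hw₂
    rw [hw_compl i (by simp [hij, hik]), hv i (by simp [hij, hik])]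
  · rw [← Finset.sum_add_sum_compl {j, k}, Finset.sum_pair hjk, Finset.sum_congr rfl hw_compl]
    simp only [w, if_neg hjk.symm, ↓reduceIte, add_sub_cancel, s, sub_add_cancel]

theorem logMap_mem_interior_stdAmoeba {n : ℕ} {z : Fin n → ℂ} (hz : z ∈ stdHyperplane n)
    {j k : Fin n} (hjk : (z j * conj (z k)).im ≠ 0) : LogMap z ∈ interior (stdAmoeba n) := by
  have hne : j ≠ k := by
    rintro rfl
    simp [mul_conj] at hjk
  set v : (Fin n → ℝ) → Fin n → ℂ := fun x i => Real.exp (x i) * exp ((z i).arg * I)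
  set s : (Fin n → ℝ) → ℂ := fun x => 1 - ∑ i ∈ ({j, k} : Finset (Fin n))ᶜ, v x i
  have hexp : ∀ i, Real.exp (LogMap z i) = ‖z i‖ := fun i =>
    Real.exp_log (norm_pos_iff.2 (hz.1 i))
  have hs₀ : s (LogMap z) = z j + z k := by
    have hv₀ : ∀ i, v (LogMap z) i = z i := fun i => by
      simp only [v, hexp, norm_mul_exp_arg_mul_I]
    have hsum := hz.2
    rw [← Finset.sum_add_sum_compl {j, k}, Finset.sum_pair hne] at hsum
    simp only [s, hv₀]
    linear_combination -hsum
  obtain ⟨hlo, hhi⟩ := norm_add_mem_Ioo hjk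
  rw [← hs₀, ← hexp, ← hexp] at hlo hhi
  have hs_cont : Continuous fun x => ‖s x‖ := by fun_prop
  have hlo' := ContinuousAt.eventually_lt (f := fun x => |Real.exp (x j) - Real.exp (x k)|)
    (by fun_prop) hs_cont.continuousAt hlo
  have hhi' := ContinuousAt.eventually_lt (g := fun x => Real.exp (x j) + Real.exp (x k))
    hs_cont.continuousAt (by fun_prop) hhi
  refine mem_interior_iff_mem_nhds.2 ((hlo'.and hhi').mono fun x hx => ?_)
  refine mem_stdAmoeba_of_mem_Icc hne (v x) (fun i _ => ?_) ⟨hx.1.le, hx.2.le⟩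
  simp [v, norm_exp_ofReal_mul_I]

theorem statement7_general (n : ℕ) (z : Fin n → ℂ)
    (hz : z ∈ stdHyperplane n) (hfr : LogMap z ∈ frontier (stdAmoeba n)) :
    ∀ i, (z i).im = 0 := by
  by_contra! h
  obtain ⟨k, hk⟩ := h
  obtain ⟨j, hjk⟩ := exists_im_mul_conj_ne_zero hz.2 hk
  exact hfr.2 (logMap_mem_interior_stdAmoeba hz hjk)

/-- The part of the standard hyperplane lying over the boundary of its
amoeba is contained in the real locus of the hyperplane. -/
theorem statement7 (n : ℕ) (hn : 1 ≤ n) (z : Fin n → ℂ)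
    (hz : z ∈ stdHyperplane n) (hfr : LogMap z ∈ frontier (stdAmoeba n)) :
    ∀ i, (z i).im = 0 :=
  statement7_general n z hz hfr
end

section
/- Let n ≥ 1 and let M and 𝒜 be as in the context. The restriction of the map Log to the standard hyperplane M is injective over the boundary of the amoeba: if z, z′ ∈ M satisfy Log(z) = Log(z′) and this common point lies in the frontier (topological boundary) of 𝒜, then z = z′. -/
open scoped BigOperators

/-!
A point `x` lies in the amoeba exactly when the lengths `1, exp x₁, …, exp xₙ` satisfy the polygon
inequalities (none exceeds the sum of the others): a closed polygon with these side lengths is a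
solution of `z₁ + ⋯ + zₙ = 1` with `‖zᵢ‖ = exp xᵢ`, and such a polygon is built one side at a time by
the intermediate value theorem on a circle. The strict inequalities cut out an open subset of the
amoeba, so at a frontier point one of them is an equality. Equality in the triangle inequality then
forces every `zᵢ` to be real, with a sign fixed by which inequality is tight, so `z` is determined by
`‖z‖`, i.e. by `Log z`.
-/

open Finset

section Polygon

variable {E : Type*} [NormedAddCommGroup E] [NormedSpace ℝ E]

theorem exists_norm_eq_and_norm_sub_eq_s8 (hE : 1 < Module.rank ℝ E) (x : E) {ρ d : ℝ}
    (hρ : 0 ≤ ρ) (h₁ : |‖x‖ - ρ| ≤ d) (h₂ : d ≤ ‖x‖ + ρ) :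
    ∃ w : E, ‖w‖ = ρ ∧ ‖x - w‖ = d := by
  have : Nontrivial E := (rank_pos_iff_nontrivial (R := ℝ)).1 (zero_lt_one.trans hE)
  obtain ⟨u, hu, hxu⟩ : ∃ u : E, ‖u‖ = 1 ∧ x = ‖x‖ • u := by
    rcases eq_or_ne x 0 with rfl | hx
    · obtain ⟨u, hu⟩ := exists_norm_eq E zero_le_one
      exact ⟨u, hu, by simp⟩
    · exact ⟨‖x‖⁻¹ • x, norm_smul_inv_norm hx, (smul_inv_smul₀ (norm_ne_zero_iff.mpr hx) x).symm⟩
  have hnear : ‖x - ρ • u‖ = |‖x‖ - ρ| := by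
    conv_lhs => rw [hxu, ← sub_smul, norm_smul, hu, mul_one, Real.norm_eq_abs]
  have hfar : ‖x - -(ρ • u)‖ = ‖x‖ + ρ := by
    conv_lhs => rw [sub_neg_eq_add, hxu, ← add_smul, norm_smul, hu, mul_one, Real.norm_eq_abs]
    exact abs_of_nonneg (by positivity)
  have hmem : ρ • u ∈ Metric.sphere (0 : E) ρ := by simp [norm_smul, hu, abs_of_nonneg hρ]
  obtain ⟨w, hw, hwd⟩ := (isPreconnected_sphere hE 0 ρ).intermediate_value hmem
    (by simpa using hmem) (continuous_const.sub continuous_id).norm.continuousOn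
    ⟨hnear ▸ h₁, hfar ▸ h₂⟩
  exact ⟨w, mem_sphere_zero_iff_norm.mp hw, hwd⟩

-- `2 * t i ≤ ‖x‖ + ∑ t` says that the side `t i` of the polygon with sides `t`, `‖x‖` is at most
-- the sum of the other sides.
theorem exists_forall_norm_eq_and_sum_eq (hE : 1 < Module.rank ℝ E) {ι : Type*} [DecidableEq ι]
    (s : Finset ι) {t : ι → ℝ} (ht : ∀ i ∈ s, 0 ≤ t i) {x : E} (hx : ‖x‖ ≤ ∑ i ∈ s, t i)
    (hxt : ∀ i ∈ s, 2 * t i ≤ ‖x‖ + ∑ j ∈ s, t j) :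
    ∃ v : ι → E, (∀ i ∈ s, ‖v i‖ = t i) ∧ ∑ i ∈ s, v i = x := by
  induction s using Finset.induction generalizing x with
  | empty => exact ⟨0, by simp, by simpa [eq_comm] using hx⟩
  | @insert a s ha ih =>
    simp only [sum_insert ha] at hx hxt
    have hta := ht a (mem_insert_self a s)
    have hts : ∀ i ∈ s, 0 ≤ t i := fun i hi => ht i (mem_insert_of_mem hi)
    set T := ∑ j ∈ s, t j
    have hT : 0 ≤ T := sum_nonneg hts
    -- `m` is the least length of a vector that the sides `t i`, `i ∈ s`, can sum to
    set m := s.fold max 0 (fun i => 2 * t i - T)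
    have hm : m ≤ min (‖x‖ + t a) T := by
      refine (fold_max_le _).mpr ⟨le_min (by positivity) hT, fun i hi => le_min ?_ ?_⟩
      · linarith [hxt i (mem_insert_of_mem hi)]
      · linarith [single_le_sum hts hi]
    have hxa : |‖x‖ - t a| ≤ min (‖x‖ + t a) T :=
      le_min (abs_le.mpr ⟨by linarith [norm_nonneg x], by linarith⟩)
        (abs_le.mpr ⟨by linarith [hxt a (mem_insert_self a s)], by linarith⟩)
    obtain ⟨w, hw, hxw⟩ := exists_norm_eq_and_norm_sub_eq_s8 hE x hta (le_max_left _ m)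
      ((max_le hxa hm).trans (min_le_left _ _))
    obtain ⟨v, hv, hvx⟩ := ih hts (x := x - w) (hxw ▸ (max_le hxa hm).trans (min_le_right _ _))
      fun i hi => by
        have : 2 * t i - T ≤ m := (le_fold_max _).mpr (Or.inr ⟨i, hi, le_rfl⟩)
        linarith [le_max_right |‖x‖ - t a| m]
    refine ⟨Function.update v a w, fun i hi => ?_, ?_⟩
    · rcases eq_or_ne i a with rfl | hia
      · simpa using hw
      · simpa [hia] using hv i ((mem_insert.mp hi).resolve_left hia)
    · rw [sum_insert ha, Function.update_self,
        sum_congr rfl fun i hi => Function.update_of_ne (ne_of_mem_of_not_mem hi ha) w v, hvx,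
        add_sub_cancel]

end Polygon

theorem two_mul_norm_le_norm_sum_add_sum_norm {E ι : Type*} [SeminormedAddCommGroup E]
    [Fintype ι] [DecidableEq ι] (z : ι → E) (k : ι) :
    2 * ‖z k‖ ≤ ‖∑ i, z i‖ + ∑ i, ‖z i‖ := by
  have hk : z k = ∑ i, z i - ∑ j ∈ univ.erase k, z j := by
    rw [← add_sum_erase univ z (mem_univ k), add_sub_cancel_right]
  have := norm_sub_le (∑ i, z i) (∑ j ∈ univ.erase k, z j)
  rw [← hk] at this
  rw [← add_sum_erase univ (fun i => ‖z i‖) (mem_univ k)]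
  linarith [norm_sum_le (univ.erase k) z]

namespace RCLike

variable {K : Type*} [RCLike K]

theorem eq_norm_of_sum_norm_le_re {ι : Type*} {s : Finset ι} {w : ι → K}
    (h : ∑ i ∈ s, ‖w i‖ ≤ re (∑ i ∈ s, w i)) : ∀ i ∈ s, w i = ‖w i‖ := by
  have hle : ∀ i ∈ s, re (w i) ≤ ‖w i‖ := fun i _ => re_le_norm (w i)
  have heq : ∑ i ∈ s, re (w i) = ∑ i ∈ s, ‖w i‖ :=
    (sum_le_sum hle).antisymm (by rwa [← map_sum])
  exact fun i hi => norm_le_re_iff_eq_norm.mp ((sum_eq_sum_iff_of_le hle).mp heq i hi).ge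

theorem eq_norm_of_norm_one_add_eq {x : K} (h : ‖1 + x‖ = 1 + ‖x‖) : x = ‖x‖ := by
  -- squaring gives `1 + ‖x‖ ^ 2 + 2 * re x = (1 + ‖x‖) ^ 2`
  have hsq := congrArg (· ^ 2) h
  simp only [← normSq_eq_def', normSq_add, map_one, one_mul, conj_re] at hsq
  rw [normSq_eq_def'] at hsq
  exact norm_le_re_iff_eq_norm.mp (by nlinarith)

end RCLike

section SumEqOne

variable {K ι : Type*} [RCLike K] [Fintype ι] {z : ι → K}

theorem eq_norm_of_sum_eq_one_of_sum_norm_eq_one (hsum : ∑ i, z i = 1)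
    (h : ∑ i, ‖z i‖ = 1) (i : ι) : z i = ‖z i‖ :=
  RCLike.eq_norm_of_sum_norm_le_re (by simp [hsum, h]) i (mem_univ i)

theorem eq_norm_and_eq_neg_norm_of_sum_eq_one [DecidableEq ι] (hsum : ∑ i, z i = 1) {k : ι}
    (hk : 2 * ‖z k‖ = 1 + ∑ i, ‖z i‖) : z k = ‖z k‖ ∧ ∀ j ≠ k, z j = -‖z j‖ := by
  set S := ∑ j ∈ univ.erase k, z j
  have hzk : z k = 1 + -S := by
    rw [← hsum, ← add_sum_erase univ z (mem_univ k), add_neg_cancel_right]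
  have hnorm : ‖z k‖ = 1 + ∑ j ∈ univ.erase k, ‖z j‖ := by
    rw [← add_sum_erase univ (fun i => ‖z i‖) (mem_univ k)] at hk
    linarith
  have hS : ‖S‖ ≤ ∑ j ∈ univ.erase k, ‖z j‖ := norm_sum_le _ _
  have htri : ‖1 + -S‖ ≤ 1 + ‖-S‖ := by simpa using norm_add_le (1 : K) (-S)
  have hSeq : ‖S‖ = ∑ j ∈ univ.erase k, ‖z j‖ := by
    rw [← hzk, norm_neg] at htri
    linarith
  have hSnorm : -S = ‖S‖ := by
    rw [← norm_neg S]
    exact RCLike.eq_norm_of_norm_one_add_eq (by rw [← hzk, norm_neg]; linarith)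
  have hneg : ∀ j ∈ univ.erase k, -z j = ‖-z j‖ := by
    refine RCLike.eq_norm_of_sum_norm_le_re (le_of_eq ?_)
    rw [sum_neg_distrib, hSnorm, RCLike.ofReal_re, hSeq]
    simp only [norm_neg]
  refine ⟨?_, fun j hj => ?_⟩
  · conv_lhs => rw [hzk, hSnorm]
    rw [hnorm, ← hSeq]
    push_cast
    rfl
  · rw [← norm_neg, ← hneg j (mem_erase.mpr ⟨hj, mem_univ j⟩), neg_neg]

end SumEqOne

open Real

theorem exp_logMap {n : ℕ} {z : Fin n → ℂ} {i : Fin n} (hz : z i ≠ 0) :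
    exp (LogMap z i) = ‖z i‖ :=
  exp_log (norm_pos_iff.mpr hz)

theorem mem_stdAmoeba_iff {n : ℕ} {x : Fin n → ℝ} :
    x ∈ stdAmoeba n ↔ 1 ≤ ∑ i, exp (x i) ∧ ∀ k, 2 * exp (x k) ≤ 1 + ∑ i, exp (x i) := by
  constructor
  · rintro ⟨z, ⟨hz, hsum⟩, rfl⟩
    simp only [exp_logMap (hz _)]
    refine ⟨by simpa [hsum] using norm_sum_le univ z, fun k => ?_⟩
    simpa [hsum] using two_mul_norm_le_norm_sum_add_sum_norm z k
  · rintro ⟨h₁, h₂⟩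
    have hrank : 1 < Module.rank ℝ ℂ := by rw [Complex.rank_real_complex]; norm_num
    obtain ⟨v, hv, hsum⟩ := exists_forall_norm_eq_and_sum_eq hrank univ
      (t := fun i => exp (x i)) (x := (1 : ℂ)) (fun i _ => (exp_pos _).le) (by simpa using h₁)
      (by simpa using h₂)
    refine ⟨v, ⟨fun i => norm_pos_iff.mp ?_, hsum⟩, funext fun i => ?_⟩
    · rw [hv i (mem_univ i)]
      exact exp_pos _
    · simp [LogMap, hv i (mem_univ i)]

theorem subset_interior_stdAmoeba (n : ℕ) :
    {x : Fin n → ℝ | 1 < ∑ i, exp (x i) ∧ ∀ k, 2 * exp (x k) < 1 + ∑ i, exp (x i)} ⊆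
      interior (stdAmoeba n) := by
  refine interior_maximal (fun x hx => mem_stdAmoeba_iff.mpr
    ⟨hx.1.le, fun k => (hx.2 k).le⟩) ?_
  simp only [Set.ofPred_and, Set.ofPred_forall]
  exact (isOpen_lt continuous_const (by fun_prop)).inter
    (isOpen_iInter_of_finite fun k => isOpen_lt (by fun_prop) (by fun_prop))

theorem sum_norm_eq_one_or_of_logMap_notMem_interior {n : ℕ} {z : Fin n → ℂ}
    (hz : z ∈ stdHyperplane n) (hint : LogMap z ∉ interior (stdAmoeba n)) :
    ∑ i, ‖z i‖ = 1 ∨ ∃ k, 2 * ‖z k‖ = 1 + ∑ i, ‖z i‖ := by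
  have hexp : ∀ i, exp (LogMap z i) = ‖z i‖ := fun i => exp_logMap (hz.1 i)
  have hmem := mem_stdAmoeba_iff.mp ⟨z, hz, rfl⟩
  simp only [hexp] at hmem
  by_contra! hne
  refine hint (subset_interior_stdAmoeba n ⟨?_, fun k => ?_⟩)
  · simpa [hexp] using hmem.1.lt_of_ne' hne.1
  · simpa [hexp] using (hmem.2 k).lt_of_ne (hne.2 k)

theorem norm_eq_of_logMap_eq {n : ℕ} {z z' : Fin n → ℂ} (hz : ∀ i, z i ≠ 0)
    (hz' : ∀ i, z' i ≠ 0) (h : LogMap z = LogMap z') (i : Fin n) : ‖z i‖ = ‖z' i‖ := by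
  rw [← exp_logMap (hz i), h, exp_logMap (hz' i)]

theorem statement8_general (n : ℕ) (z z' : Fin n → ℂ)
    (hz : z ∈ stdHyperplane n) (hz' : z' ∈ stdHyperplane n)
    (heq : LogMap z = LogMap z') (hfr : LogMap z ∈ frontier (stdAmoeba n)) :
    z = z' := by
  have hnorm := norm_eq_of_logMap_eq hz.1 hz'.1 heq
  have hsum : ∑ i, ‖z' i‖ = ∑ i, ‖z i‖ := by simp only [hnorm]
  funext i
  rcases sum_norm_eq_one_or_of_logMap_notMem_interior hz hfr.2 with hA | ⟨k, hB⟩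
  · rw [eq_norm_of_sum_eq_one_of_sum_norm_eq_one hz.2 hA i,
      eq_norm_of_sum_eq_one_of_sum_norm_eq_one hz'.2 (hsum ▸ hA) i, hnorm]
  · have hB' : 2 * ‖z' k‖ = 1 + ∑ i, ‖z' i‖ := by rw [hsum, ← hnorm]; exact hB
    obtain ⟨hzk, hzj⟩ := eq_norm_and_eq_neg_norm_of_sum_eq_one hz.2 hB
    obtain ⟨hzk', hzj'⟩ := eq_norm_and_eq_neg_norm_of_sum_eq_one hz'.2 hB'
    rcases eq_or_ne i k with rfl | hik
    · rw [hzk, hzk', hnorm]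
    · rw [hzj i hik, hzj' i hik, hnorm]

/-- The restriction of `Log` to the standard hyperplane is injective over
the boundary of the amoeba. -/
theorem statement8 (n : ℕ) (hn : 1 ≤ n) (z z' : Fin n → ℂ)
    (hz : z ∈ stdHyperplane n) (hz' : z' ∈ stdHyperplane n)
    (heq : LogMap z = LogMap z') (hfr : LogMap z ∈ frontier (stdAmoeba n)) :
    z = z' :=
  statement8_general n z z' hz hz' heq hfr
end

section
/- Let n ≥ 1 and let M and 𝒜 be as in the context. The set E = {u ∈ ℝⁿ : e^{u₁} + ⋯ + e^{uₙ} < 1} is a connected component of the complement ℝⁿ ∖ 𝒜 of the amoeba of the standard hyperplane: E is disjoint from 𝒜, and for every point u ∈ E the connected component of u in ℝⁿ ∖ 𝒜 equals E. (This is the distinguished component of the complement of the amoeba whose inverse image under Log is contained in the region where all coordinates have norm at most 1.) -/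
open scoped BigOperators

/-!
On the amoeba `∑ exp uᵢ = ∑ ‖zᵢ‖ ≥ ‖∑ zᵢ‖ = 1` by the triangle inequality, so the open set
`E = {∑ exp uᵢ < 1}` misses it, while every point of the level set `∑ exp uᵢ = 1` is the image
of the positive real point `zᵢ = exp uᵢ`, so the frontier of `E` lies in the amoeba. `E` is
convex, being a sublevel set of a convex function, and a preconnected set that avoids a set `S`
but whose frontier lies in `S` is a whole connected component of `Sᶜ`.
-/

theorem connectedComponentIn_compl_eq_of_frontier_subset {X : Type*} [TopologicalSpace X]
    {S U : Set X} {x : X} (hU : IsPreconnected U) (hUS : Disjoint U S) (hfr : frontier U ⊆ S)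
    (hx : x ∈ U) : connectedComponentIn Sᶜ x = U := by
  have hUS' : U ⊆ Sᶜ := hUS.subset_compl_right
  have hnot_frontier : ∀ y ∈ Sᶜ, y ∉ frontier U := fun y hy hyfr => hy (hfr hyfr)
  have hx_int : x ∈ interior U := by
    by_contra h
    exact hnot_frontier x (hUS' hx) ⟨subset_closure hx, h⟩
  refine (hU.subset_connectedComponentIn hx hUS').antisymm' ?_
  have hcover : connectedComponentIn Sᶜ x ⊆ interior U ∪ (closure U)ᶜ := by
    intro y hy
    by_cases hy_int : y ∈ interior U
    · exact Or.inl hy_int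
    · exact Or.inr fun hy_cl =>
        hnot_frontier y (connectedComponentIn_subset _ _ hy) ⟨hy_cl, hy_int⟩
  have hsep : Disjoint (interior U) (closure U)ᶜ :=
    Set.disjoint_compl_right_iff_subset.2 (interior_subset.trans subset_closure)
  refine (isPreconnected_connectedComponentIn.subset_left_of_subset_union isOpen_interior
    isClosed_closure.isOpen_compl hsep hcover ?_).trans interior_subset
  exact ⟨x, mem_connectedComponentIn (hUS' hx), hx_int⟩

theorem convexOn_sum_exp (ι : Type*) [Fintype ι] :
    ConvexOn ℝ Set.univ fun u : ι → ℝ => ∑ i, Real.exp (u i) := by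
  refine ⟨convex_univ, fun x _ y _ a b ha hb hab => ?_⟩
  simp only [smul_eq_mul, Finset.mul_sum, ← Finset.sum_add_distrib, Pi.add_apply,
    Pi.smul_apply]
  exact Finset.sum_le_sum fun i _ => convexOn_exp.2 trivial trivial ha hb hab

theorem convex_setOf_sum_exp_lt {ι : Type*} [Fintype ι] (c : ℝ) :
    Convex ℝ {u : ι → ℝ | ∑ i, Real.exp (u i) < c} := by
  simpa using (convexOn_sum_exp ι).convex_lt c

theorem one_le_sum_exp_of_mem_stdAmoeba {n : ℕ} {u : Fin n → ℝ} (hu : u ∈ stdAmoeba n) :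
    1 ≤ ∑ i, Real.exp (u i) := by
  obtain ⟨z, ⟨hz0, hzsum⟩, rfl⟩ := hu
  calc (1 : ℝ) = ‖∑ i, z i‖ := by rw [hzsum, norm_one]
    _ ≤ ∑ i, ‖z i‖ := norm_sum_le _ _
    _ = ∑ i, Real.exp (LogMap z i) := by
      simp only [LogMap, Real.exp_log (norm_pos_iff.2 (hz0 _))]

theorem mem_stdAmoeba_of_sum_exp_eq_one {n : ℕ} {u : Fin n → ℝ}
    (hu : ∑ i, Real.exp (u i) = 1) : u ∈ stdAmoeba n := by
  refine ⟨fun i => (Real.exp (u i) : ℂ), ⟨fun i => Complex.ofReal_ne_zero.2 (Real.exp_ne_zero _),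
    by beta_reduce; exact_mod_cast hu⟩, ?_⟩
  funext i
  simp only [LogMap, Complex.norm_real, Real.norm_of_nonneg (Real.exp_nonneg _), Real.log_exp]

theorem disjoint_setOf_sum_exp_lt_one_stdAmoeba (n : ℕ) :
    Disjoint {u : Fin n → ℝ | ∑ i, Real.exp (u i) < 1} (stdAmoeba n) :=
  Set.disjoint_left.2 fun _ hu hA => (one_le_sum_exp_of_mem_stdAmoeba hA).not_gt hu

theorem frontier_setOf_sum_exp_lt_one_subset_stdAmoeba (n : ℕ) :
    frontier {u : Fin n → ℝ | ∑ i, Real.exp (u i) < 1} ⊆ stdAmoeba n := fun _ hu =>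
  mem_stdAmoeba_of_sum_exp_eq_one <|
    frontier_lt_subset_eq (f := fun u : Fin n → ℝ => ∑ i, Real.exp (u i)) (g := fun _ => 1)
      (by fun_prop) continuous_const hu

theorem statement9_general (n : ℕ) :
    ({u : Fin n → ℝ | ∑ i, Real.exp (u i) < 1} ∩ stdAmoeba n = ∅) ∧
    ∀ u ∈ {u : Fin n → ℝ | ∑ i, Real.exp (u i) < 1},
      connectedComponentIn ((stdAmoeba n)ᶜ) u
        = {u : Fin n → ℝ | ∑ i, Real.exp (u i) < 1} :=
  ⟨(disjoint_setOf_sum_exp_lt_one_stdAmoeba n).inter_eq, fun _ hu =>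
    connectedComponentIn_compl_eq_of_frontier_subset (convex_setOf_sum_exp_lt 1).isPreconnected
      (disjoint_setOf_sum_exp_lt_one_stdAmoeba n)
      (frontier_setOf_sum_exp_lt_one_subset_stdAmoeba n) hu⟩

/-- The set `E = {u : e^{u₁} + ⋯ + e^{uₙ} < 1}` is a connected component
of the complement of the amoeba of the standard hyperplane: it is disjoint from the
amoeba, and it is the connected component of each of its points in the complement. -/
theorem statement9 (n : ℕ) (hn : 1 ≤ n) :
    ({u : Fin n → ℝ | ∑ i, Real.exp (u i) < 1} ∩ stdAmoeba n = ∅) ∧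
    ∀ u ∈ {u : Fin n → ℝ | ∑ i, Real.exp (u i) < 1},
      connectedComponentIn ((stdAmoeba n)ᶜ) u
        = {u : Fin n → ℝ | ∑ i, Real.exp (u i) < 1} :=
  statement9_general n
end
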